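/- Suppose there is no bias and the latent-quality distribution is group-independent: β_A = β_B = 0, μ_A = μ_B, η_A = η_B = η > 0, and σ_A > σ_B > 0. Let γ ∈ [0,1) and assume x^fair(γ) ∈ D. If α ≠ 1/2, then Q(α) > Q(x^fair(γ)) ≥ Q(x^obl); if α = 1/2, then Q(α) = Q(x^fair(γ)) = Q(x^obl). In particular, in this setting imposing the γ-rule on the group-oblivious algorithm never decreases the selection utility, for every choice of the parameters. -/

import Mathlib

/-!
For equal means, `Q(x) - μ` is `(1/α)` times a positive combination of `x ↦ φ(Φ⁻¹(1 - x))` and of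
the same function at the group-B rate `y`; since `d/dx φ(Φ⁻¹(1 - x)) = Φ⁻¹(1 - x)`, the derivative
of `Q` is `(p_A/α)(σ̃_A Φ⁻¹(1 - x) - σ̃_B Φ⁻¹(1 - y))`, strictly decreasing in `x`. At demographic
parity `x = y = α` it equals `(p_A/α)(σ̃_A - σ̃_B) Φ⁻¹(1 - α)`, which has the sign of `α - 1/2`
because `σ̂_A > σ̂_B` gives `σ̃_A < σ̃_B`. So `Q` strictly increases towards `α` from the side of
`1/2`. A common threshold selects both groups at rates on the same side of `1/2`, group A
(larger `σ̂`) closer to `1/2`; so `x^obl` lies strictly between `1/2` and `α`, and clamping it to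
`I_γ`, which contains `α` in its interior, moves it towards `α` without reaching it.
-/

noncomputable def gpdf (t : ℝ) : ℝ := Real.exp (-t ^ 2 / 2) / Real.sqrt (2 * Real.pi)

noncomputable def gcdf (x : ℝ) : ℝ := ∫ t in Set.Iic x, gpdf t

noncomputable def gquant : ℝ → ℝ := Function.invFun gcdf

noncomputable def sHat (η σ : ℝ) : ℝ := Real.sqrt (η ^ 2 + σ ^ 2)

noncomputable def sTil (η σ : ℝ) : ℝ := η ^ 2 / sHat η σ

def Dset (pA α : ℝ) : Set ℝ :=
  {x | x ∈ Set.Ioo (0:ℝ) 1 ∧ (α - pA * x) / (1 - pA) ∈ Set.Ioo (0:ℝ) 1}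

noncomputable def Qfun (pA α μA μB sA sB x : ℝ) : ℝ :=
  (1 / α) * (pA * (μA * x + sA * gpdf (gquant (1 - x)))
    + (1 - pA) * (μB * ((α - pA * x) / (1 - pA))
      + sB * gpdf (gquant (1 - (α - pA * x) / (1 - pA)))))

noncomputable def clampTo (lo hi x : ℝ) : ℝ := min hi (max lo x)

open MeasureTheory intervalIntegral Set Filter Topology

lemma gpdf_eq_gaussianPDFReal : gpdf = ProbabilityTheory.gaussianPDFReal 0 1 := by
  ext t
  simp [gpdf, ProbabilityTheory.gaussianPDFReal, div_eq_inv_mul]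

lemma gpdf_pos (t : ℝ) : 0 < gpdf t := by
  unfold gpdf
  positivity

lemma gpdf_neg (t : ℝ) : gpdf (-t) = gpdf t := by
  simp [gpdf]

lemma continuous_gpdf : Continuous gpdf := by
  unfold gpdf
  fun_prop

lemma integrable_gpdf : Integrable gpdf :=
  gpdf_eq_gaussianPDFReal ▸ ProbabilityTheory.integrable_gaussianPDFReal 0 1

lemma gcdf_add_integral_Ioi (x : ℝ) : gcdf x + ∫ t in Ioi x, gpdf t = 1 := by
  rw [gcdf, integral_Iic_add_Ioi integrable_gpdf.integrableOn integrable_gpdf.integrableOn,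
    gpdf_eq_gaussianPDFReal, ProbabilityTheory.integral_gaussianPDFReal_eq_one 0 one_ne_zero]

lemma gcdf_neg (x : ℝ) : gcdf (-x) = 1 - gcdf x := by
  have h := integral_comp_neg_Iic (-x) gpdf
  simp only [gpdf_neg, neg_neg] at h
  rw [gcdf, h, ← gcdf_add_integral_Ioi x]
  ring

lemma gcdf_zero : gcdf 0 = 1 / 2 := by
  have h := gcdf_neg 0
  rw [neg_zero] at h
  linarith

lemma gcdf_eq_add_intervalIntegral (x : ℝ) : gcdf x = gcdf 0 + ∫ t in (0:ℝ)..x, gpdf t := by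
  rw [gcdf, gcdf, ← integral_Iic_sub_Iic integrable_gpdf.integrableOn integrable_gpdf.integrableOn]
  ring

lemma hasDerivAt_gcdf (x : ℝ) : HasDerivAt gcdf (gpdf x) x := by
  have h := (integral_hasDerivAt_right (a := 0) (b := x) integrable_gpdf.intervalIntegrable
    (continuous_gpdf.stronglyMeasurableAtFilter _ _) continuous_gpdf.continuousAt).const_add
    (gcdf 0)
  exact h.congr_of_eventuallyEq (.of_forall gcdf_eq_add_intervalIntegral)

lemma gcdf_strictMono : StrictMono gcdf := by
  intro a b hab
  rw [gcdf_eq_add_intervalIntegral a, gcdf_eq_add_intervalIntegral b, add_lt_add_iff_left,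
    ← sub_pos, integral_interval_sub_left integrable_gpdf.intervalIntegrable
      integrable_gpdf.intervalIntegrable]
  exact intervalIntegral_pos_of_pos integrable_gpdf.intervalIntegrable gpdf_pos hab

lemma gcdf_pos (x : ℝ) : 0 < gcdf x :=
  (setIntegral_nonneg measurableSet_Iic fun t _ => (gpdf_pos t).le).trans_lt
    (gcdf_strictMono (sub_one_lt x))

lemma gcdf_lt_one (x : ℝ) : gcdf x < 1 := by
  have h := gcdf_add_integral_Ioi (x + 1)
  have h₀ : 0 ≤ ∫ t in Ioi (x + 1), gpdf t :=
    setIntegral_nonneg measurableSet_Ioi fun t _ => (gpdf_pos t).le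
  linarith [gcdf_strictMono (lt_add_one x)]

lemma tendsto_gcdf_atTop : Tendsto gcdf atTop (𝓝 1) := by
  have h := (intervalIntegral_tendsto_integral_Ioi 0 integrable_gpdf.integrableOn
    tendsto_id).const_add (gcdf 0)
  rw [gcdf_add_integral_Ioi] at h
  exact h.congr fun x => (gcdf_eq_add_intervalIntegral x).symm

lemma tendsto_gcdf_atBot : Tendsto gcdf atBot (𝓝 0) := by
  have h := tendsto_gcdf_atTop.comp tendsto_neg_atBot_atTop
  simpa [Function.comp_def, gcdf_neg] using h.const_sub 1

lemma Ioo_subset_range_gcdf : Ioo 0 1 ⊆ range gcdf := by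
  intro p hp
  obtain ⟨a, ha⟩ := (tendsto_gcdf_atBot.eventually_lt_const hp.1).exists
  obtain ⟨b, hb⟩ := (tendsto_gcdf_atTop.eventually_const_lt hp.2).exists
  exact intermediate_value_univ a b (continuous_iff_continuousAt.2 fun x =>
    (hasDerivAt_gcdf x).continuousAt) ⟨ha.le, hb.le⟩

lemma gcdf_gquant {p : ℝ} (hp : p ∈ Ioo 0 1) : gcdf (gquant p) = p :=
  Function.invFun_eq (Ioo_subset_range_gcdf hp)

lemma gquant_gcdf (x : ℝ) : gquant (gcdf x) = x :=
  Function.leftInverse_invFun gcdf_strictMono.injective x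

lemma gquant_strictMonoOn : StrictMonoOn gquant (Ioo 0 1) := by
  intro p hp q hq hpq
  rwa [← gcdf_strictMono.lt_iff_lt, gcdf_gquant hp, gcdf_gquant hq]

lemma gquant_half : gquant (1 / 2) = 0 := by
  rw [← gcdf_zero, gquant_gcdf]

lemma gquant_neg_of_lt_half {p : ℝ} (hp : 0 < p) (hp' : p < 1 / 2) : gquant p < 0 :=
  gquant_half ▸ gquant_strictMonoOn ⟨hp, by linarith⟩ ⟨by norm_num, by norm_num⟩ hp'

lemma gquant_pos_of_half_lt {p : ℝ} (hp : 1 / 2 < p) (hp' : p < 1) : 0 < gquant p :=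
  gquant_half ▸ gquant_strictMonoOn ⟨by norm_num, by norm_num⟩ ⟨by linarith, hp'⟩ hp

lemma continuousAt_gquant {p : ℝ} (hp : p ∈ Ioo 0 1) : ContinuousAt gquant p := by
  refine continuousAt_of_monotoneOn_of_image_mem_nhds gquant_strictMonoOn.monotoneOn
    (isOpen_Ioo.mem_nhds hp) ?_
  have : gquant '' Ioo 0 1 = univ :=
    eq_univ_of_forall fun x => ⟨gcdf x, ⟨gcdf_pos x, gcdf_lt_one x⟩, gquant_gcdf x⟩
  rw [this]
  exact univ_mem

lemma hasDerivAt_gquant {p : ℝ} (hp : p ∈ Ioo 0 1) :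
    HasDerivAt gquant (gpdf (gquant p))⁻¹ p :=
  (hasDerivAt_gcdf (gquant p)).of_local_left_inverse (continuousAt_gquant hp)
    (gpdf_pos _).ne' (eventually_of_mem (isOpen_Ioo.mem_nhds hp) fun _ => gcdf_gquant)

lemma hasDerivAt_gpdf (t : ℝ) : HasDerivAt gpdf (-t * gpdf t) t := by
  have h : HasDerivAt (fun t : ℝ => -t ^ 2 / 2) (-t) t := by
    simpa using (((hasDerivAt_pow 2 t).neg).div_const 2).congr_deriv (by ring)
  exact (h.exp.div_const (Real.sqrt (2 * Real.pi))).congr_deriv (by unfold gpdf; ring)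

lemma one_sub_mem_Ioo {x : ℝ} (hx : x ∈ Ioo 0 1) : 1 - x ∈ Ioo 0 1 :=
  ⟨sub_pos.2 hx.2, sub_lt_self 1 hx.1⟩

lemma one_sub_gcdf_mem_Ioo (x : ℝ) : 1 - gcdf x ∈ Ioo 0 1 :=
  one_sub_mem_Ioo ⟨gcdf_pos x, gcdf_lt_one x⟩

lemma strictAntiOn_gquant_one_sub : StrictAntiOn (fun x => gquant (1 - x)) (Ioo 0 1) :=
  fun _ hx _ hy hxy => gquant_strictMonoOn (one_sub_mem_Ioo hy) (one_sub_mem_Ioo hx) (by linarith)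

lemma hasDerivAt_gpdf_gquant_one_sub {x : ℝ} (hx : x ∈ Ioo 0 1) :
    HasDerivAt (fun x => gpdf (gquant (1 - x))) (gquant (1 - x)) x := by
  have h := (hasDerivAt_gpdf _).comp x
    ((hasDerivAt_gquant (one_sub_mem_Ioo hx)).comp x ((hasDerivAt_id x).const_sub 1))
  refine h.congr_deriv ?_
  simp only [Function.comp_apply]
  field_simp [(gpdf_pos (gquant (1 - x))).ne']

noncomputable def rateB (pA α x : ℝ) : ℝ := (α - pA * x) / (1 - pA)

section Utility

variable {pA α : ℝ}

lemma rateB_eq {x y : ℝ} (hpA : pA ≠ 1) (h : pA * x + (1 - pA) * y = α) : rateB pA α x = y := by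
  rw [rateB, div_eq_iff (sub_ne_zero.2 hpA.symm)]
  linarith

lemma rateB_self (hpA : pA ≠ 1) : rateB pA α α = α :=
  rateB_eq hpA (by ring)

lemma rateB_strictAnti (hpA : pA ∈ Ioo 0 1) : StrictAnti (rateB pA α) := fun x y hxy =>
  div_lt_div_of_pos_right (by nlinarith [hpA.1]) (by linarith [hpA.2])

lemma mem_Dset_of_add_eq {x y : ℝ} (hpA : pA ≠ 1) (hx : x ∈ Ioo 0 1) (hy : y ∈ Ioo 0 1)
    (h : pA * x + (1 - pA) * y = α) : x ∈ Dset pA α :=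
  ⟨hx, show rateB pA α x ∈ Ioo 0 1 by rwa [rateB_eq hpA h]⟩

lemma self_mem_Dset (hpA : pA ≠ 1) (hα : α ∈ Ioo 0 1) : α ∈ Dset pA α :=
  ⟨hα, show rateB pA α α ∈ Ioo 0 1 by rwa [rateB_self hpA]⟩

lemma ordConnected_Dset (hpA : pA ∈ Ioo 0 1) : (Dset pA α).OrdConnected := by
  refine ⟨fun x hx y hy z hz => ⟨⟨hx.1.1.trans_le hz.1, hz.2.trans_lt hy.1.2⟩, ?_, ?_⟩⟩
  · exact hy.2.1.trans_le ((rateB_strictAnti hpA).antitone hz.2)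
  · exact ((rateB_strictAnti hpA).antitone hz.1).trans_lt hx.2.2

/-- `gquant (1 - x)` is the standardized cutoff of a group selected at rate `x`. -/
noncomputable def thresholdGap (pA α sA sB x : ℝ) : ℝ :=
  sA * gquant (1 - x) - sB * gquant (1 - rateB pA α x)

lemma hasDerivAt_Qfun {μA μB sA sB x : ℝ} (hpA : pA ≠ 1) (hx : x ∈ Dset pA α) :
    HasDerivAt (Qfun pA α μA μB sA sB) (pA / α * (μA - μB + thresholdGap pA α sA sB x)) x := by
  have hy : HasDerivAt (rateB pA α) (-pA / (1 - pA)) x :=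
    ((((hasDerivAt_id x).const_mul pA).const_sub α).div_const (1 - pA)).congr_deriv (by ring)
  have hgx := hasDerivAt_gpdf_gquant_one_sub hx.1
  have hgy := (hasDerivAt_gpdf_gquant_one_sub hx.2).comp x hy
  have h := (((((hasDerivAt_id x).const_mul μA).add (hgx.const_mul sA)).const_mul pA).add
    (((hy.const_mul μB).add (hgy.const_mul sB)).const_mul (1 - pA))).const_mul (1 / α)
  refine h.congr_deriv ?_
  simp only [thresholdGap, rateB]
  field_simp [sub_ne_zero.2 hpA.symm]
  ring

variable {sA sB : ℝ}

lemma thresholdGap_self (hpA : pA ≠ 1) : thresholdGap pA α sA sB α = (sA - sB) * gquant (1 - α) := by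
  rw [thresholdGap, rateB_self hpA]
  ring

lemma strictAntiOn_thresholdGap (hpA : pA ∈ Ioo 0 1) (hsA : 0 ≤ sA) (hsB : 0 < sB) :
    StrictAntiOn (thresholdGap pA α sA sB) (Dset pA α) := by
  intro x hx y hy hxy
  have hA : gquant (1 - y) ≤ gquant (1 - x) := (strictAntiOn_gquant_one_sub hx.1 hy.1 hxy).le
  have hB : gquant (1 - rateB pA α x) < gquant (1 - rateB pA α y) :=
    strictAntiOn_gquant_one_sub hy.2 hx.2 (rateB_strictAnti hpA hxy)
  simp only [thresholdGap]
  nlinarith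

lemma strictMonoOn_Qfun {μ : ℝ} (hpA : pA ∈ Ioo 0 1) (hα : α ∈ Ioo (1 / 2) 1) (hsA : 0 ≤ sA)
    (hsAB : sA < sB) : StrictMonoOn (Qfun pA α μ μ sA sB) (Dset pA α ∩ Iic α) := by
  have hα₀ : 0 < α := by linarith [hα.1]
  refine strictMonoOn_of_deriv_pos ((ordConnected_Dset hpA).inter ordConnected_Iic).convex
    (fun x hx => (hasDerivAt_Qfun hpA.2.ne hx.1).continuousAt.continuousWithinAt) fun x hx => ?_
  rw [interior_inter, interior_Iic] at hx
  have hxD := interior_subset hx.1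
  rw [(hasDerivAt_Qfun hpA.2.ne hxD).deriv, sub_self, zero_add]
  have hgap := strictAntiOn_thresholdGap hpA hsA (hsA.trans_lt hsAB) hxD
    (self_mem_Dset hpA.2.ne ⟨hα₀, hα.2⟩) hx.2
  have hcut : gquant (1 - α) < 0 := gquant_neg_of_lt_half (by linarith [hα.2]) (by linarith [hα.1])
  rw [thresholdGap_self hpA.2.ne] at hgap
  exact mul_pos (div_pos hpA.1 hα₀) ((mul_pos_of_neg_of_neg (by linarith) hcut).trans hgap)

lemma strictAntiOn_Qfun {μ : ℝ} (hpA : pA ∈ Ioo 0 1) (hα : α ∈ Ioo 0 (1 / 2)) (hsA : 0 ≤ sA)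
    (hsAB : sA < sB) : StrictAntiOn (Qfun pA α μ μ sA sB) (Dset pA α ∩ Ici α) := by
  refine strictAntiOn_of_deriv_neg ((ordConnected_Dset hpA).inter ordConnected_Ici).convex
    (fun x hx => (hasDerivAt_Qfun hpA.2.ne hx.1).continuousAt.continuousWithinAt) fun x hx => ?_
  rw [interior_inter, interior_Ici] at hx
  have hxD := interior_subset hx.1
  rw [(hasDerivAt_Qfun hpA.2.ne hxD).deriv, sub_self, zero_add]
  have hgap := strictAntiOn_thresholdGap hpA hsA (hsA.trans_lt hsAB)
    (self_mem_Dset hpA.2.ne ⟨hα.1, by linarith [hα.2]⟩) hxD hx.2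
  have hcut : 0 < gquant (1 - α) := gquant_pos_of_half_lt (by linarith [hα.2]) (by linarith [hα.1])
  rw [thresholdGap_self hpA.2.ne] at hgap
  exact mul_neg_of_pos_of_neg (div_pos hpA.1 hα.1)
    (hgap.trans (mul_neg_of_neg_of_pos (by linarith) hcut))

end Utility

lemma sHat_pos {η : ℝ} (hη : η ≠ 0) (σ : ℝ) : 0 < sHat η σ :=
  Real.sqrt_pos.2 (by positivity)

lemma sHat_lt_sHat {η σ σ' : ℝ} (hσ : 0 ≤ σ) (hσσ' : σ < σ') : sHat η σ < sHat η σ' :=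
  Real.sqrt_lt_sqrt (by positivity) (by nlinarith)

lemma sTil_lt_sTil {η σ σ' : ℝ} (hη : η ≠ 0) (hσ : 0 ≤ σ) (hσσ' : σ < σ') :
    sTil η σ' < sTil η σ :=
  div_lt_div_of_pos_left (by positivity) (sHat_pos hη σ) (sHat_lt_sHat hσ hσσ')

lemma half_lt_one_sub_gcdf_div {a b c : ℝ} (hb : 0 < b) (hba : b < a) (hc : c < 0) :
    1 / 2 < 1 - gcdf (c / a) ∧ 1 - gcdf (c / a) < 1 - gcdf (c / b) := by
  have h₀ : gcdf (c / a) < gcdf 0 := gcdf_strictMono (div_neg_of_neg_of_pos hc (hb.trans hba))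
  have hba' : gcdf (c / b) < gcdf (c / a) := gcdf_strictMono <| by
    rw [div_lt_div_iff₀ hb (hb.trans hba)]
    nlinarith
  rw [gcdf_zero] at h₀
  constructor <;> linarith

lemma one_sub_gcdf_div_lt_half {a b c : ℝ} (hb : 0 < b) (hba : b < a) (hc : 0 < c) :
    1 - gcdf (c / b) < 1 - gcdf (c / a) ∧ 1 - gcdf (c / a) < 1 / 2 := by
  have h₀ : gcdf 0 < gcdf (c / a) := gcdf_strictMono (div_pos hc (hb.trans hba))
  have hba' : gcdf (c / a) < gcdf (c / b) := gcdf_strictMono (div_lt_div_of_pos_left hc hb hba)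
  rw [gcdf_zero] at h₀
  constructor <;> linarith

section Clamp

variable {lo hi a x : ℝ}

lemma clampTo_eq_self (hlo : lo ≤ x) (hhi : x ≤ hi) : clampTo lo hi x = x := by
  rw [clampTo, max_eq_right hlo, min_eq_right hhi]

lemma clampTo_mem_Ico (hlo : lo < a) (hhi : a < hi) (hx : x < a) : clampTo lo hi x ∈ Ico x a :=
  ⟨le_min (hx.trans hhi).le (le_max_right lo x), min_lt_of_right_lt (max_lt hlo hx)⟩

lemma clampTo_mem_Ioc (hlo : lo < a) (hhi : a < hi) (hx : a < x) : clampTo lo hi x ∈ Ioc a x :=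
  ⟨lt_min hhi (lt_max_of_lt_right hx), min_le_of_right_le (max_le (hlo.trans hx).le le_rfl)⟩

end Clamp

lemma gammaRule_bounds {pA α γ : ℝ} (hpA : pA ∈ Ioo 0 1) (hα : 0 < α) (hγ : γ ∈ Ico 0 1) :
    γ * α / ((1 - pA) + γ * pA) < α ∧ α < α / (pA + γ * (1 - pA)) := by
  obtain ⟨hpA₀, hpA₁⟩ := hpA
  have hslack : 0 < α * (1 - pA) * (1 - γ) := by
    have := hγ.2
    positivity
  constructor
  · rw [div_lt_iff₀ (by nlinarith [hγ.1])]
    nlinarith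
  · rw [lt_div_iff₀ (by nlinarith [hγ.1])]
    nlinarith

/-- with no bias and a group-independent latent-quality
distribution, the `γ`-rule never decreases the utility of the group-oblivious
selection: strict improvement of demographic parity for `α ≠ 1/2`, equality at
`α = 1/2`. -/
theorem stmt18 (pA α μ η σA σB γ θ xobl xfair : ℝ)
    (hpA : pA ∈ Set.Ioo (0:ℝ) 1) (hα : α ∈ Set.Ioo (0:ℝ) 1)
    (hη : 0 < η) (hσB : 0 < σB) (hσ : σB < σA)
    (hγ : γ ∈ Set.Ico (0:ℝ) 1)
    (hθ : pA * (1 - gcdf ((θ - μ) / sHat η σA))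
        + (1 - pA) * (1 - gcdf ((θ - μ) / sHat η σB)) = α)
    (hxobl : xobl = 1 - gcdf ((θ - μ) / sHat η σA))
    (hxfair : xfair = clampTo (γ * α / ((1 - pA) + γ * pA)) (α / (pA + γ * (1 - pA))) xobl)
    (hfD : xfair ∈ Dset pA α) :
    (α ≠ 1 / 2 →
      Qfun pA α μ μ (sTil η σA) (sTil η σB) xfair
          < Qfun pA α μ μ (sTil η σA) (sTil η σB) α
      ∧ Qfun pA α μ μ (sTil η σA) (sTil η σB) xobl
          ≤ Qfun pA α μ μ (sTil η σA) (sTil η σB) xfair)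
    ∧ (α = 1 / 2 →
      Qfun pA α μ μ (sTil η σA) (sTil η σB) α
          = Qfun pA α μ μ (sTil η σA) (sTil η σB) xfair
      ∧ Qfun pA α μ μ (sTil η σA) (sTil η σB) xfair
          = Qfun pA α μ μ (sTil η σA) (sTil η σB) xobl) := by
  have hŝB := sHat_pos hη.ne' σB
  have hŝ := sHat_lt_sHat (η := η) hσB.le hσ
  have hsA : 0 ≤ sTil η σA := by unfold sTil sHat; positivity
  have hs := sTil_lt_sTil hη.ne' hσB.le hσ
  have hxD : xobl ∈ Dset pA α := hxobl ▸
    mem_Dset_of_add_eq hpA.2.ne (one_sub_gcdf_mem_Ioo _) (one_sub_gcdf_mem_Ioo _) hθ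
  have hαD := self_mem_Dset hpA.2.ne hα
  obtain ⟨hlo, hhi⟩ := gammaRule_bounds hpA hα.1 hγ
  rcases lt_trichotomy θ μ with h | rfl | h
  · obtain ⟨hhalf, hxy⟩ := half_lt_one_sub_gcdf_div hŝB hŝ (sub_neg.2 h)
    rw [← hxobl] at hhalf hxy
    have hxα : xobl < α := by nlinarith [hpA.2]
    obtain ⟨hle, hlt⟩ := hxfair ▸ clampTo_mem_Ico hlo hhi hxα
    have hQ := strictMonoOn_Qfun (μ := μ) hpA ⟨hhalf.trans hxα, hα.2⟩ hsA hs
    exact ⟨fun _ => ⟨hQ ⟨hfD, hlt.le⟩ ⟨hαD, self_mem_Iic⟩ hlt,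
      hQ.monotoneOn ⟨hxD, hxα.le⟩ ⟨hfD, hlt.le⟩ hle⟩, fun h => by linarith⟩
  · simp only [sub_self, zero_div, gcdf_zero] at hθ hxobl
    have hα2 : α = 1 / 2 := by linarith
    have hfx : xfair = xobl := hxfair ▸ clampTo_eq_self (by linarith) (by linarith)
    have hxα : xobl = α := by linarith
    exact ⟨fun h => absurd hα2 h, fun _ => by rw [hfx, hxα]; exact ⟨rfl, rfl⟩⟩
  · obtain ⟨hxy, hhalf⟩ := one_sub_gcdf_div_lt_half hŝB hŝ (sub_pos.2 h)
    rw [← hxobl] at hhalf hxy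
    have hαx : α < xobl := by nlinarith [hpA.2]
    obtain ⟨hlt, hle⟩ := hxfair ▸ clampTo_mem_Ioc hlo hhi hαx
    have hQ := strictAntiOn_Qfun (μ := μ) hpA ⟨hα.1, hαx.trans hhalf⟩ hsA hs
    exact ⟨fun _ => ⟨hQ ⟨hαD, self_mem_Ici⟩ ⟨hfD, hlt.le⟩ hlt,
      hQ.antitoneOn ⟨hfD, hlt.le⟩ ⟨hxD, hαx.le⟩ hle⟩, fun h => by linarith⟩
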